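/- arXiv:math/9912150 — 2 statements merged into one kernel-verified Lean document; each statement's English description precedes it below -/
import Mathlib

section
/- Let a compact group K act on a Kaehler manifold F with moment map μ and extended action of G = K^ℂ, and let Ψ_x : G → ℝ be the integral of the moment map at x ∈ F. An element g ∈ G is a critical point of Ψ_x if and only if μ(gx) = 0. Moreover, there is at most one K-orbit inside each G-orbit Gx on which μ vanishes: if μ(x) = 0 and μ(e^{is}x) = 0 for some s ∈ k, then e^{is}x = x. -/
/-- Critical points of the integral of the moment map, and uniqueness of
the zero-`K`-orbit inside a `G`-orbit.  Setting as in the integral-of-the-moment-map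
framework: `m x s = ⟨μ(x), s⟩`, `expi s = e^{is}`, `expK s = e^s ∈ K`, `Xnorm s y = ‖X_s(y)‖²`,
and `Ψ` the integral of the moment map (`Ψ x 1 = 0`, derivative of `u ↦ Ψ x (e^{ius}g)`
equal to `⟨μ(e^{ius}g·x), s⟩`, vanishing derivatives along `K`, Cartan decomposition
`G = K·exp(i𝔨)`).  Then:
(a) `g` is a critical point of `Ψ_x` (all directional derivatives vanish) iff `μ(g·x) = 0`;
(b) if `μ(x) = 0` and `μ(e^{is}·x) = 0` then `e^{is}·x = x` — there is at most one `K`-orbit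
in `G·x` on which `μ` vanishes. -/
theorem stmt_17 {F : Type*} {G : Type*} [Group G] [MulAction G F] (K : Subgroup G)
    {𝔨 : Type*} [AddCommGroup 𝔨] [Module ℝ 𝔨]
    (expi expK : 𝔨 → G) (hexpK : ∀ s, expK s ∈ K)
    (m : F → 𝔨 → ℝ) (Xnorm : 𝔨 → F → ℝ) (Ψ : F → G → ℝ)
    (hΨone : ∀ x, Ψ x 1 = 0)
    (hΨderiv : ∀ (x : F) (s : 𝔨) (g : G) (t : ℝ),
      HasDerivAt (fun u : ℝ => Ψ x (expi (u • s) * g)) (m ((expi (t • s) * g) • x) s) t)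
    (hΨK : ∀ (x : F) (s : 𝔨) (g : G) (t : ℝ),
      HasDerivAt (fun u : ℝ => Ψ x (expK (u • s) * g)) 0 t)
    (hXnorm : ∀ (x : F) (s : 𝔨) (t : ℝ),
      HasDerivAt (fun u : ℝ => m (expi (u • s) • x) s) (Xnorm s (expi (t • s) • x)) t)
    (hXnonneg : ∀ s y, 0 ≤ Xnorm s y)
    (hXfix : ∀ (s : 𝔨) (y : F), Xnorm s y = 0 → expi s • y = y)
    (hcartan : ∀ g : G, ∃ k ∈ K, ∃ s : 𝔨, g = k * expi s) :
    (∀ (x : F) (g : G),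
      ((∀ s : 𝔨, deriv (fun t : ℝ => Ψ x (expi (t • s) * g)) 0 = 0) ∧
       (∀ s : 𝔨, deriv (fun t : ℝ => Ψ x (expK (t • s) * g)) 0 = 0)) ↔
      ∀ s : 𝔨, m (g • x) s = 0) ∧
    (∀ (x : F) (s : 𝔨),
      (∀ s' : 𝔨, m x s' = 0) → (∀ s' : 𝔨, m (expi s • x) s' = 0) → expi s • x = x) := by
  -- `expi 0` acts trivially
  have h0 : ∀ y : F, expi (0 : 𝔨) • y = y := by
    intro y
    have hx : ∀ x : F, expi (0 : 𝔨) • (expi (0 : 𝔨) • x) = expi (0 : 𝔨) • x := by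
      intro x
      have h1 := hXnorm x 0 0
      simp only [smul_zero] at h1
      have h2 : HasDerivAt (fun _ : ℝ => m (expi (0 : 𝔨) • x) (0 : 𝔨))
          (0 : ℝ) (0 : ℝ) := hasDerivAt_const _ _
      have := h1.unique h2
      exact hXfix 0 _ this
    have := hx ((expi (0 : 𝔨))⁻¹ • y)
    rwa [smul_inv_smul] at this
  constructor
  · intro x g
    constructor
    · rintro ⟨h1, _⟩ s
      have hd := (hΨderiv x s g 0).deriv
      rw [h1 s] at hd
      have : (expi ((0 : ℝ) • s) * g) • x = g • x := by
        rw [zero_smul, mul_smul, h0]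
      rw [this] at hd
      exact hd.symm
    · intro hm
      constructor
      · intro s
        have hd := (hΨderiv x s g 0).deriv
        have : (expi ((0 : ℝ) • s) * g) • x = g • x := by
          rw [zero_smul, mul_smul, h0]
        rw [this, hm s] at hd
        exact hd
      · intro s
        exact (hΨK x s g 0).deriv
  · intro x s hmx hms
    set f : ℝ → ℝ := fun u => m (expi (u • s) • x) s with hf
    have hderiv : ∀ t : ℝ, HasDerivAt f (Xnorm s (expi (t • s) • x)) t :=
      fun t => hXnorm x s t
    have hmono : Monotone f := by
      apply monotone_of_deriv_nonneg
      · exact fun t => (hderiv t).differentiableAt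
      · intro t
        rw [(hderiv t).deriv]
        exact hXnonneg _ _
    have hf0 : f 0 = 0 := by
      simp only [hf, zero_smul, h0]
      exact hmx s
    have hf1 : f 1 = 0 := by
      simp only [hf, one_smul]
      exact hms s
    have hzero : ∀ t ∈ Set.Icc (0 : ℝ) 1, f t = 0 := by
      intro t ht
      have h1 : f 0 ≤ f t := hmono ht.1
      have h2 : f t ≤ f 1 := hmono ht.2
      rw [hf0] at h1; rw [hf1] at h2
      linarith
    -- derivative of f at 0 within [0,1] must be 0
    have hw1 : HasDerivWithinAt f (Xnorm s (expi ((0:ℝ) • s) • x)) (Set.Icc 0 1) 0 :=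
      (hderiv 0).hasDerivWithinAt
    have hw2 : HasDerivWithinAt f 0 (Set.Icc (0:ℝ) 1) 0 := by
      have hc : HasDerivWithinAt (fun _ : ℝ => (0 : ℝ)) 0 (Set.Icc (0:ℝ) 1) 0 :=
        (hasDerivAt_const _ _).hasDerivWithinAt
      exact hc.congr hzero (hzero 0 ⟨le_refl _, zero_le_one⟩)
    have hud : UniqueDiffWithinAt ℝ (Set.Icc (0:ℝ) 1) 0 :=
      uniqueDiffOn_Icc_zero_one 0 ⟨le_refl _, zero_le_one⟩
    have hXz : Xnorm s (expi ((0:ℝ) • s) • x) = 0 := hud.eq_deriv _ hw1 hw2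
    rw [zero_smul, h0] at hXz
    exact hXfix s x hXz
end

section
/- Let a compact group K act on a compact Kaehler manifold F with moment map μ and holomorphic extension to G = K^ℂ. A point x ∈ F is analytically stable (meaning λ(x;s) > 0 for every s ∈ k, where λ(x;s) = lim_{t→∞}⟨μ(e^{its}x), s⟩) if and only if the integral of the moment map Ψ_x : G → ℝ is linearly proper, i.e. there exist constants C₁, C₂ > 0 such that ‖s‖ ≤ C₁ Ψ_x(e^{is}) + C₂ for all s ∈ k. -/
open MeasureTheory intervalIntegral

/-- Analytic stability is equivalent to linear properness of the
integral of the moment map.  A compact group `K` acts on a compact Kaehler manifold `F`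
with moment map `μ`; `m x s = ⟨μ(x), s⟩` is the moment pairing (linear in `s`), `expi s = e^{is}`,
and `Ψ` is the integral of the moment map, with `Ψ(x, e^{is}) = ∫₀¹ ⟨μ(e^{its}x), s⟩ dt` and
`t ↦ λ_t(x;s) = ⟨μ(e^{its}x), s⟩` nondecreasing and jointly continuous.  A point `x` is
*analytically stable* when the maximal weight `λ(x;s) = lim_{t→∞} λ_t(x;s)` is strictly
positive for every nonzero `s ∈ 𝔨` (equivalently, by monotonicity: some `λ_t(x;s) > 0`),
and `Ψ_x` is *linearly proper* when `‖s‖ ≤ C₁·Ψ_x(e^{is}) + C₂` for some constants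
`C₁, C₂ > 0`.  The statement: these two conditions are equivalent. -/
theorem stmt_18 {F : Type*} [TopologicalSpace F] [CompactSpace F]
    {G : Type*} [Group G] [MulAction G F]
    {𝔨 : Type*} [NormedAddCommGroup 𝔨] [NormedSpace ℝ 𝔨] [FiniteDimensional ℝ 𝔨]
    (expi : 𝔨 → G) (m : F → 𝔨 → ℝ) (Ψ : F → G → ℝ)
    (hΨint : ∀ (x : F) (s : 𝔨), Ψ x (expi s) = ∫ t in (0:ℝ)..1, m (expi (t • s) • x) s)
    (hmono : ∀ (x : F) (s : 𝔨), Monotone (fun t : ℝ => m (expi (t • s) • x) s))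
    (hlin : ∀ (x : F) (c : ℝ) (s : 𝔨), 0 ≤ c → m x (c • s) = c * m x s)
    (hcont : Continuous (fun p : F × 𝔨 => m p.1 p.2))
    (hflow : Continuous (fun p : ℝ × 𝔨 × F => expi (p.1 • p.2.1) • p.2.2))
    (x : F) :
    (∀ s : 𝔨, s ≠ 0 → ∃ t : ℝ, 0 < m (expi (t • s) • x) s) ↔
    (∃ C₁ C₂ : ℝ, 0 < C₁ ∧ 0 < C₂ ∧ ∀ s : 𝔨, ‖s‖ ≤ C₁ * Ψ x (expi s) + C₂) := by
  have hm0 : ∀ y : F, m y (0 : 𝔨) = 0 := by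
    intro y
    have h := hlin y 0 0 le_rfl
    simpa using h
  have hcont_t : ∀ s : 𝔨, Continuous (fun t : ℝ => m (expi (t • s) • x) s) := by
    intro s
    have h1 : Continuous (fun t : ℝ => expi (t • s) • x) :=
      hflow.comp (continuous_id.prodMk (continuous_const.prodMk continuous_const))
    exact hcont.comp (h1.prodMk continuous_const)
  constructor
  · -- stability → linear properness
    intro hstab
    by_cases htriv : ∀ s : 𝔨, s = 0
    · refine ⟨1, 1, one_pos, one_pos, fun s => ?_⟩
      rw [htriv s]
      have hz : Ψ x (expi (0:𝔨)) = 0 := by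
        rw [hΨint]
        simp [hm0]
      rw [hz]
      simp
    · push_neg at htriv
      obtain ⟨s₀, hs₀⟩ := htriv
      set S := Metric.sphere (0:𝔨) 1 with hSdef
      have hScomp : IsCompact S := isCompact_sphere 0 1
      have hSmem : ∀ u : 𝔨, u ∈ S ↔ ‖u‖ = 1 := fun u => mem_sphere_zero_iff_norm
      have hnormS : ∀ s : 𝔨, s ≠ 0 → ‖s‖⁻¹ • s ∈ S := by
        intro s hs
        rw [hSmem, norm_smul, norm_inv, norm_norm,
          inv_mul_cancel₀ (norm_ne_zero_iff.mpr hs)]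
      have hSne : S.Nonempty := ⟨‖s₀‖⁻¹ • s₀, hnormS s₀ hs₀⟩
      have hcont_u : ∀ t : ℝ, Continuous (fun u : 𝔨 => m (expi (t • u) • x) u) := by
        intro t
        have h1 : Continuous (fun u : 𝔨 => expi (t • u) • x) :=
          hflow.comp (continuous_const.prodMk (continuous_id.prodMk continuous_const))
        exact hcont.comp (h1.prodMk continuous_id)
      -- find a uniform time N at which the weight is positive on the whole sphere
      have key : ∃ N : ℕ, ∀ u ∈ S, 0 < m (expi ((N:ℝ) • u) • x) u := by
        by_contra hN
        push_neg at hN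
        set A : ℕ → Set 𝔨 := fun n => S ∩ {u : 𝔨 | m (expi ((n:ℝ) • u) • x) u ≤ 0} with hA
        have hclosed : ∀ n, IsClosed (A n) :=
          fun n => Metric.isClosed_sphere.inter (isClosed_le (hcont_u _) continuous_const)
        have hne : ∀ n, (A n).Nonempty := by
          intro n
          obtain ⟨u, huS, hu⟩ := hN n
          exact ⟨u, huS, hu⟩
        have hsub : ∀ n, A (n + 1) ⊆ A n := by
          intro n u hu
          refine ⟨hu.1, le_trans (hmono x u ?_) hu.2⟩
          push_cast
          linarith
        have hcomp : IsCompact (A 0) :=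
          hScomp.of_isClosed_subset (hclosed 0) Set.inter_subset_left
        obtain ⟨u, hu⟩ :=
          IsCompact.nonempty_iInter_of_sequence_nonempty_isCompact_isClosed A hsub hne
            hcomp hclosed
        have huS : u ∈ S := (Set.mem_iInter.1 hu 0).1
        have hune : u ≠ 0 := by
          intro h
          have := (hSmem u).1 huS
          rw [h, norm_zero] at this
          norm_num at this
        obtain ⟨t, ht⟩ := hstab u hune
        obtain ⟨n, hn⟩ := exists_nat_ge t
        have h1 : m (expi ((n:ℝ) • u) • x) u ≤ 0 := (Set.mem_iInter.1 hu n).2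
        have h2 : m (expi (t • u) • x) u ≤ m (expi ((n:ℝ) • u) • x) u := hmono x u hn
        linarith
      obtain ⟨N, hNpos⟩ := key
      -- minimum ε of the weight at time N over the sphere
      obtain ⟨u₀, hu₀S, hu₀min⟩ := hScomp.exists_isMinOn hSne ((hcont_u (N:ℝ)).continuousOn)
      set ε := m (expi ((N:ℝ) • u₀) • x) u₀ with hεdef
      have hε : 0 < ε := hNpos u₀ hu₀S
      have hεle : ∀ u ∈ S, ε ≤ m (expi ((N:ℝ) • u) • x) u := fun u hu => hu₀min hu
      -- uniform bound M on the moment pairing over F × S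
      obtain ⟨M₀, hM₀⟩ :=
        (isCompact_univ.prod hScomp).exists_bound_of_continuousOn hcont.continuousOn
      set M := max M₀ 1 with hMdef
      have hM : 0 < M := lt_of_lt_of_le one_pos (le_max_right _ _)
      have hMb : ∀ (y : F) (u : 𝔨), u ∈ S → |m y u| ≤ M := by
        intro y u hu
        have := hM₀ (y, u) ⟨Set.mem_univ y, hu⟩
        rw [Real.norm_eq_abs] at this
        exact le_trans this (le_max_left _ _)
      set T := (N:ℝ) + 1 with hTdef
      have hT1 : (1:ℝ) ≤ T := by
        have := Nat.cast_nonneg (α := ℝ) N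
        linarith
      have hT : 0 < T := lt_of_lt_of_le one_pos hT1
      have hεT : ∀ u ∈ S, ε ≤ m (expi (T • u) • x) u := by
        intro u hu
        refine le_trans (hεle u hu) (hmono x u ?_)
        simp [hTdef]
      -- general lower bound: m y s ≥ -(‖s‖ * M)
      have hlow : ∀ (y : F) (s : 𝔨), -(‖s‖ * M) ≤ m y s := by
        intro y s
        rcases eq_or_ne s 0 with rfl | hs
        · simp [hm0]
        · have hu : ‖s‖⁻¹ • s ∈ S := hnormS s hs
          have hpos : 0 < ‖s‖ := norm_pos_iff.mpr hs
          have heq : m y s = ‖s‖ * m y (‖s‖⁻¹ • s) := by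
            rw [← hlin y ‖s‖ _ (norm_nonneg s), smul_smul, mul_inv_cancel₀ hpos.ne',
              one_smul]
          rw [heq]
          have hb := (abs_le.1 (hMb y _ hu)).1
          nlinarith
      refine ⟨ε⁻¹, ε⁻¹ * (T * (M + 2 * ε)), by positivity, by positivity, fun s => ?_⟩
      -- main estimate: ε * ‖s‖ ≤ Ψ x (expi s) + T * (M + 2 * ε)
      have hmain : ε * ‖s‖ ≤ Ψ x (expi s) + T * (M + 2 * ε) := by
        rw [hΨint]
        set g : ℝ → ℝ := fun t => m (expi (t • s) • x) s with hgdef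
        have hgint : ∀ a b : ℝ, IntervalIntegrable g volume a b :=
          fun a b => (hcont_t s).intervalIntegrable a b
        have hglow : ∀ t : ℝ, -(‖s‖ * M) ≤ g t := fun t => hlow _ s
        rcases le_or_gt ‖s‖ T with hrT | hrT
        · -- small ‖s‖ : crude bound
          have h1 : ∫ t in (0:ℝ)..1, (-(‖s‖ * M)) ≤ ∫ t in (0:ℝ)..1, g t :=
            integral_mono_on zero_le_one intervalIntegrable_const (hgint 0 1)
              (fun t _ => hglow t)
          rw [intervalIntegral.integral_const, smul_eq_mul] at h1
          nlinarith [norm_nonneg s]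
        · -- large ‖s‖ : split the integral at a = T / ‖s‖
          have hr : 0 < ‖s‖ := lt_trans hT hrT
          have hs0 : s ≠ 0 := norm_pos_iff.mp hr
          set a := T / ‖s‖ with hadef
          have ha0 : 0 < a := div_pos hT hr
          have ha1 : a ≤ 1 := (div_le_one hr).2 hrT.le
          have har : a * ‖s‖ = T := div_mul_cancel₀ T hr.ne'
          have hga : ‖s‖ * ε ≤ g a := by
            have hu : ‖s‖⁻¹ • s ∈ S := hnormS s hs0
            have hsu : s = ‖s‖ • (‖s‖⁻¹ • s) := by
              rw [smul_smul, mul_inv_cancel₀ hr.ne', one_smul]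
            have haT : a • s = T • (‖s‖⁻¹ • s) := by
              simp only [smul_smul, hadef, div_eq_mul_inv]
            calc ‖s‖ * ε ≤ ‖s‖ * m (expi (T • (‖s‖⁻¹ • s)) • x) (‖s‖⁻¹ • s) := by
                  have := hεT _ hu
                  nlinarith
              _ = m (expi (T • (‖s‖⁻¹ • s)) • x) (‖s‖ • (‖s‖⁻¹ • s)) :=
                  (hlin _ ‖s‖ _ hr.le).symm
              _ = g a := by rw [hgdef]; rw [← haT, ← hsu]
          have hsplit : (∫ t in (0:ℝ)..a, g t) + ∫ t in a..1, g t = ∫ t in (0:ℝ)..1, g t :=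
            integral_add_adjacent_intervals (hgint 0 a) (hgint a 1)
          have h1 : ∫ t in (0:ℝ)..a, (-(‖s‖ * M)) ≤ ∫ t in (0:ℝ)..a, g t :=
            integral_mono_on ha0.le intervalIntegrable_const (hgint 0 a)
              (fun t _ => hglow t)
          have h2 : ∫ t in a..1, (‖s‖ * ε) ≤ ∫ t in a..1, g t :=
            integral_mono_on ha1 intervalIntegrable_const (hgint a 1)
              (fun t ht => le_trans hga (hmono x s ht.1))
          rw [intervalIntegral.integral_const, smul_eq_mul] at h1 h2
          have e1 : (a - 0) * -(‖s‖ * M) = -(T * M) := by rw [← har]; ring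
          have e2 : (1 - a) * (‖s‖ * ε) = ‖s‖ * ε - T * ε := by rw [← har]; ring
          rw [e1] at h1
          rw [e2] at h2
          have ec : ε * ‖s‖ = ‖s‖ * ε := mul_comm _ _
          have hTε : 0 ≤ T * ε := mul_nonneg hT.le hε.le
          linarith
      calc ‖s‖ = (ε * ‖s‖) / ε := (mul_div_cancel_left₀ _ hε.ne').symm
        _ ≤ (Ψ x (expi s) + T * (M + 2 * ε)) / ε := by gcongr
        _ = ε⁻¹ * Ψ x (expi s) + ε⁻¹ * (T * (M + 2 * ε)) := by ring
  · -- linear properness → stability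
    rintro ⟨C₁, C₂, hC₁, hC₂, hub⟩ s hs
    by_contra hneg
    push_neg at hneg
    have hs' : 0 < ‖s‖ := norm_pos_iff.mpr hs
    set l : ℝ := (C₂ + 1) / ‖s‖ with hl
    have hl0 : 0 ≤ l := by positivity
    have hΨneg : Ψ x (expi (l • s)) ≤ 0 := by
      rw [hΨint]
      have h1 : ∫ t in (0:ℝ)..1, m (expi (t • (l • s)) • x) (l • s) ≤
          ∫ t in (0:ℝ)..1, (0:ℝ) := by
        refine integral_mono_on zero_le_one ?_ intervalIntegrable_const (fun t _ => ?_)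
        · exact (hcont_t (l • s)).intervalIntegrable 0 1
        · rw [smul_smul, hlin _ l s hl0]
          exact mul_nonpos_of_nonneg_of_nonpos hl0 (hneg _)
      simpa using h1
    have hub' := hub (l • s)
    rw [norm_smul, Real.norm_eq_abs, abs_of_nonneg hl0] at hub'
    have hls : l * ‖s‖ = C₂ + 1 := div_mul_cancel₀ _ hs'.ne'
    nlinarith
end
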